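/- arXiv:1808.10697 — 6 statements merged into one kernel-verified Lean document; each statement's English description precedes it below -/
import Mathlib

section
/- In any pseudo-BCI-algebra A, (x → y) → 1 = (x → 1) ⇝ (y → 1) and (x ⇝ y) ⇝ 1 = (x ⇝ 1) → (y ⇝ 1) for all x, y ∈ A. -/
class PseudoBCI (A : Type*) where
  ar : A → A → A
  sq : A → A → A
  one : A
  ax1 : ∀ x y z : A, sq (ar x y) (sq (ar y z) (ar x z)) = one
  ax2 : ∀ x y z : A, ar (sq x y) (ar (sq y z) (sq x z)) = one
  ax3 : ∀ x : A, ar one x = x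
  ax4 : ∀ x : A, sq one x = x
  ax5 : ∀ x y : A, ar x y = one → ar y x = one → x = y

open PseudoBCI

section Aux

variable {A : Type*} [PseudoBCI A]

lemma pL1a (x : A) : ar x x = one := by
  have h := ax2 (one : A) one x
  rwa [ax4, ax4, ax3] at h

lemma pL1b (x : A) : sq x x = one := by
  have h := ax1 (one : A) one x
  rwa [ax3, ax3, ax4] at h

lemma pL2 (x y : A) : sq x (sq (ar x y) y) = one := by
  have h := ax1 (one : A) x y
  rwa [ax3, ax3] at h

lemma pL2' (x y : A) : ar x (ar (sq x y) y) = one := by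
  have h := ax2 (one : A) x y
  rwa [ax4, ax4] at h

lemma pL3 {x y : A} (h : ar x y = one) : sq x y = one := by
  have h2 := pL2 x y
  rwa [h, ax4] at h2

lemma pL3' {x y : A} (h : sq x y = one) : ar x y = one := by
  have h2 := pL2' x y
  rwa [h, ax3] at h2

lemma pL4 {x y z : A} (h1 : ar x y = one) (h2 : ar y z = one) : ar x z = one := by
  have h := ax1 x y z
  rwa [h1, h2, ax4, ax4] at h

lemma pL4' {x y z : A} (h1 : sq x y = one) (h2 : sq y z = one) : sq x z = one := by
  have h := ax2 x y z
  rwa [h1, h2, ax3, ax3] at h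

lemma pL5 {x y : A} (h : ar x y = one) (z : A) : sq (ar y z) (ar x z) = one := by
  have h2 := ax1 x y z
  rwa [h, ax4] at h2

lemma pL5' {x y : A} (h : sq x y = one) (z : A) : ar (sq y z) (sq x z) = one := by
  have h2 := ax2 x y z
  rwa [h, ax3] at h2

/-- x→1 = x⇝1 -/
lemma pF2 (x : A) : ar x one = sq x one := by
  have h1 := ax1 x one x
  rw [ax3, pL1a] at h1
  have h2 := ax2 x one x
  rw [ax4, pL1b] at h2
  exact ax5 _ _ (pL3' h1) h2

/-- residuation: y ≤⇝ x→z implies x ≤→ y⇝z -/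
lemma pM1 {x y z : A} (h : sq y (ar x z) = one) : ar x (sq y z) = one := by
  have h1 : ar (sq (ar x z) z) (sq y z) = one := pL5' h z
  have h2 : ar x (sq (ar x z) z) = one := pL3' (pL2 x z)
  exact pL4 h2 h1

/-- y ≤⇝ (x ⇝ z) implies x ≤→ (y → z) -/
lemma pL7b {x y z : A} (h : sq y (sq x z) = one) : ar x (ar y z) = one := by
  have h0 : ar y (sq x z) = one := pL3' h
  have h1 : sq (ar (sq x z) z) (ar y z) = one := pL5 h0 z
  have h1' : ar (ar (sq x z) z) (ar y z) = one := pL3' h1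
  have h2 : ar x (ar (sq x z) z) = one := pL2' x z
  exact pL4 h2 h1'

end Aux

theorem stmt6 {A : Type*} [PseudoBCI A] (x y : A) :
    ar (ar x y) one = sq (ar x one) (ar y one) ∧
    sq (sq x y) one = ar (sq x one) (sq y one) := by
  constructor
  · -- first conjunct
    set u := ar x y with hu
    set a := ar x one with ha
    set q := ar y one with hq
    -- L ≤ R
    have s1 : sq a (sq y u) = one := by
      have h := ax1 x one y
      rwa [ax3] at h
    have s1' : ar a (sq y u) = one := pL3' s1
    have s2 : ar (sq y u) (ar (sq u one) (sq y one)) = one := ax2 y u one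
    have s3 : ar a (ar (sq u one) (sq y one)) = one := pL4 s1' s2
    rw [← pF2 u, ← pF2 y, ← hq] at s3
    have s4 : sq a (ar (ar u one) q) = one := pL3 s3
    have s5 : ar (ar u one) (sq a q) = one := pM1 s4
    -- R ≤ L
    have t1 : sq u (sq q a) = one := by
      have h := ax1 x y one
      rwa [← ha, ← hq] at h
    have t1' : ar u (sq q a) = one := pL3' t1
    have t2 : sq (ar (sq q a) one) (ar u one) = one := pL5 t1' one
    have t2' : ar (ar (sq q a) one) (ar u one) = one := pL3' t2
    have t3 : ar (sq a q) (ar (sq q a) (sq a a)) = one := ax2 a q a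
    rw [pL1b] at t3
    have t4 : ar (sq a q) (ar u one) = one := pL4 t3 t2'
    exact ax5 _ _ s5 t4
  · -- second conjunct
    set u := sq x y with hu
    set a := sq x one with ha
    set q := sq y one with hq
    -- L ≤ R
    have s1 : ar a (ar y u) = one := by
      have h := ax2 x one y
      rwa [ax4] at h
    have s1' : sq a (ar y u) = one := pL3 s1
    have s2 : sq (ar y u) (sq (ar u one) (ar y one)) = one := ax1 y u one
    have s3 : sq a (sq (ar u one) (ar y one)) = one := pL4' s1' s2
    rw [pF2 u, pF2 y, ← hq] at s3
    have s4 : ar (sq u one) (ar a q) = one := pL7b s3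
    -- R ≤ L
    have t1 : ar u (ar (sq y one) (sq x one)) = one := ax2 x y one
    rw [← ha, ← hq] at t1
    have t1' : sq u (ar q a) = one := pL3 t1
    have t2 : ar (sq (ar q a) one) (sq u one) = one := pL5' t1' one
    have t3 : sq (ar a q) (sq (ar q a) (ar a a)) = one := ax1 a q a
    rw [pL1a] at t3
    have t3' : ar (ar a q) (sq (ar q a) one) = one := pL3' t3
    have t4 : ar (ar a q) (sq u one) = one := pL4 t3' t2
    exact ax5 _ _ s4 t4
end

section
/- In any pseudo-BCI-algebra A, ((x → y) ⇝ y) → y = x → y and ((x ⇝ y) → y) ⇝ y = x ⇝ y for all x, y ∈ A. -/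
open PseudoBCI

lemma p3a {A : Type*} [PseudoBCI A] (x z : A) : sq x (sq (ar x z) z) = (one : A) := by
  have h := ax1 (one : A) x z
  rwa [ax3, ax3] at h

lemma p3b {A : Type*} [PseudoBCI A] (x z : A) : ar x (ar (sq x z) z) = (one : A) := by
  have h := ax2 (one : A) x z
  rwa [ax4, ax4] at h

lemma p4a {A : Type*} [PseudoBCI A] {x y : A} (h : ar x y = one) : sq x y = one := by
  have h2 := p3a x y
  rwa [h, ax4] at h2

lemma p4b {A : Type*} [PseudoBCI A] {x y : A} (h : sq x y = one) : ar x y = one := by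
  have h2 := p3b x y
  rwa [h, ax3] at h2

lemma anti1 {A : Type*} [PseudoBCI A] {u v : A} (h : ar u v = one) (z : A) :
    sq (ar v z) (ar u z) = one := by
  have h2 := ax1 u v z
  rwa [h, ax4] at h2

lemma anti2 {A : Type*} [PseudoBCI A] {u v : A} (h : sq u v = one) (z : A) :
    ar (sq v z) (sq u z) = one := by
  have h2 := ax2 u v z
  rwa [h, ax3] at h2

theorem stmt7 {A : Type*} [PseudoBCI A] (x y : A) :
    ar (sq (ar x y) y) y = ar x y ∧ sq (ar (sq x y) y) y = sq x y := by
  constructor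
  · exact ax5 _ _ (p4b (anti1 (p4b (p3a x y)) y)) (p3b (ar x y) y)
  · exact ax5 _ _ (anti2 (p4a (p3b x y)) y) (p4b (p3a (sq x y) y))
end

section
/- Let A be a pseudo-BCI-algebra and let G_A = {x → 1 : x ∈ A}. Then G_A, with the multiplication g · h = (g → 1) ⇝ h and identity 1, is a group in which the inverse of g is g → 1. -/
open PseudoBCI

namespace PBCIAux

variable {A : Type*} [PseudoBCI A]

lemma l1 (y z : A) : sq y (sq (ar y z) z) = one := by
  have h := ax1 (one : A) y z
  rwa [ax3, ax3] at h

lemma l2 (y z : A) : ar y (ar (sq y z) z) = one := by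
  have h := ax2 (one : A) y z
  rwa [ax4, ax4] at h

lemma refl_sq (x : A) : sq x x = one := by
  have h := l1 (one : A) x
  rwa [ax4, ax3] at h

lemma refl_ar (x : A) : ar x x = one := by
  have h := l2 (one : A) x
  rwa [ax3, ax4] at h

lemma E1 {x y : A} (h : ar x y = one) : sq x y = one := by
  have h2 := l1 x y
  rwa [h, ax4] at h2

lemma E2 {x y : A} (h : sq x y = one) : ar x y = one := by
  have h2 := l2 x y
  rwa [h, ax3] at h2

lemma trans_ar {x y z : A} (h1 : ar x y = one) (h2 : ar y z = one) : ar x z = one := by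
  have h := ax1 x y z
  rwa [h1, ax4, h2, ax4] at h

lemma trans_sq {x y z : A} (h1 : sq x y = one) (h2 : sq y z = one) : sq x z = one := by
  have h := ax2 x y z
  rwa [h1, ax3, h2, ax3] at h

lemma anti1_ar {x y : A} (h : ar x y = one) (z : A) : sq (ar y z) (ar x z) = one := by
  have h2 := ax1 x y z
  rwa [h, ax4] at h2

lemma anti1_sq {x y : A} (h : sq x y = one) (z : A) : ar (sq y z) (sq x z) = one := by
  have h2 := ax2 x y z
  rwa [h, ax3] at h2

lemma mono2_ar {y z : A} (h : ar y z = one) (x : A) : sq (ar x y) (ar x z) = one := by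
  have h2 := ax1 x y z
  rwa [h, ax4] at h2

lemma mono2_sq {y z : A} (h : sq y z = one) (x : A) : ar (sq x y) (sq x z) = one := by
  have h2 := ax2 x y z
  rwa [h, ax3] at h2

/-- Exchange: x→(y⇝z) = y⇝(x→z) -/
lemma EX (x y z : A) : ar x (sq y z) = sq y (ar x z) := by
  apply ax5
  · -- ar (ar x (sq y z)) (sq y (ar x z)) = one
    have s1 : sq (ar x (sq y z)) (sq (ar (sq y z) z) (ar x z)) = one := ax1 x (sq y z) z
    have s2 : ar (sq (ar (sq y z) z) (ar x z)) (sq y (ar x z)) = one :=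
      anti1_sq (E1 (l2 y z)) (ar x z)
    exact trans_ar (E2 s1) s2
  · -- ar (sq y (ar x z)) (ar x (sq y z)) = one
    have s1 : ar (sq y (ar x z)) (ar (sq (ar x z) z) (sq y z)) = one := ax2 y (ar x z) z
    have s2 : sq (ar (sq (ar x z) z) (sq y z)) (ar x (sq y z)) = one :=
      anti1_ar (E2 (l1 x z)) (sq y z)
    exact trans_ar s1 (E2 s2)

/-- x→1 = x⇝1 -/
lemma N (x : A) : ar x one = sq x one := by
  apply ax5
  · have h := ax1 x one x
    rw [ax3, refl_ar] at h
    exact E2 h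
  · have h := ax2 x one x
    rwa [ax4, refl_sq] at h

def n (x : A) : A := ar x one

lemma sq_one (x : A) : sq x one = n x := (N x).symm

lemma Q1 (x y : A) : ar x (n y) = sq y (n x) := by
  show ar x (ar y one) = sq y (ar x one)
  rw [show ar y one = sq y one from N y, EX]

lemma Q2 (x y : A) : sq x (n y) = ar y (n x) := by
  show sq x (ar y one) = ar y (ar x one)
  rw [show ar x one = sq x one from N x, ← EX]

lemma dn_ge (x : A) : ar x (n (n x)) = one := by
  have h := l2 x one
  rwa [show sq x one = n x from sq_one x] at h

lemma anti_n {x y : A} (h : ar x y = one) : ar (n y) (n x) = one :=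
  E2 (anti1_ar h one)

lemma nnn (x : A) : n (n (n x)) = n x :=
  ax5 _ _ (anti_n (dn_ge x)) (dn_ge (n x))

lemma H1 (x y : A) : sq (ar x y) (sq (n y) (n x)) = one := ax1 x y one

lemma H2 (x y : A) : ar (sq x y) (ar (n y) (n x)) = one := by
  have h := ax2 x y one
  rwa [sq_one, sq_one] at h

lemma star_sq (x y : A) : ar (sq x y) (n (sq y x)) = one := by
  have h := ax2 x y x
  rwa [refl_sq, show ar (sq y x) one = n (sq y x) from rfl] at h

lemma star_ar (x y : A) : sq (ar x y) (n (ar y x)) = one := by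
  have h := ax1 x y x
  rwa [refl_ar, sq_one] at h

lemma R1 (a z : A) : sq (n a) (sq z (ar a z)) = one := by
  have h := ax1 a one z
  rwa [ax3] at h

lemma R2 (a z : A) : ar (n a) (ar z (sq a z)) = one := by
  have h := ax2 a one z
  rwa [ax4, sq_one] at h

lemma Dle (x y : A) : ar (n (ar x y)) (sq (n x) (n y)) = one := by
  have key : sq (n x) (sq y (n (n (ar x y)))) = one := by
    have t1 : sq (n x) (sq y (ar x y)) = one := R1 x y
    have t2 : ar (sq y (ar x y)) (sq y (n (n (ar x y)))) = one :=
      mono2_sq (E1 (dn_ge (ar x y))) y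
    exact trans_sq t1 (E1 t2)
  calc ar (n (ar x y)) (sq (n x) (n y))
      = sq (n x) (ar (n (ar x y)) (n y)) := EX _ _ _
    _ = sq (n x) (sq y (n (n (ar x y)))) := by rw [Q1]
    _ = one := key

lemma Dge (x y : A) : ar (sq (n x) (n y)) (n (ar x y)) = one := by
  have s1 : ar (sq (n x) (n y)) (n (sq (n y) (n x))) = one := star_sq (n x) (n y)
  have s2 : ar (n (sq (n y) (n x))) (n (ar x y)) = one := anti_n (E2 (H1 x y))
  exact trans_ar s1 s2

/-- (x→y)→1 = (x→1)⇝(y→1) -/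
lemma Dar (x y : A) : n (ar x y) = sq (n x) (n y) := ax5 _ _ (Dle x y) (Dge x y)

lemma Dle' (x y : A) : ar (n (sq x y)) (ar (n x) (n y)) = one := by
  have key : ar (n x) (ar y (n (n (sq x y)))) = one := by
    have t1 : ar (n x) (ar y (sq x y)) = one := R2 x y
    have t2 : sq (ar y (sq x y)) (ar y (n (n (sq x y)))) = one :=
      mono2_ar (dn_ge (sq x y)) y
    exact trans_ar t1 (E2 t2)
  apply E2
  calc sq (n (sq x y)) (ar (n x) (n y))
      = ar (n x) (sq (n (sq x y)) (n y)) := (EX _ _ _).symm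
    _ = ar (n x) (ar y (n (n (sq x y)))) := by rw [Q2]
    _ = one := key

lemma Dge' (x y : A) : ar (ar (n x) (n y)) (n (sq x y)) = one := by
  have s1 : ar (ar (n x) (n y)) (n (ar (n y) (n x))) = one := E2 (star_ar (n x) (n y))
  have s2 : ar (n (ar (n y) (n x))) (n (sq x y)) = one := anti_n (H2 x y)
  exact trans_ar s1 s2

/-- (x⇝y)→1 = (x→1)→(y→1) -/
lemma Dsq (x y : A) : n (sq x y) = ar (n x) (n y) := ax5 _ _ (Dle' x y) (Dge' x y)

lemma nn_of_mem {x : A} (h : ∃ a : A, ar a one = x) : n (n x) = x := by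
  obtain ⟨a, rfl⟩ := h
  exact nnn a

lemma n_mul {g h : A} (hg : n (n g) = g) : n (sq (n g) h) = ar g (n h) := by
  rw [Dsq, hg]

lemma nn_mul {g h : A} (hg : n (n g) = g) (hh : n (n h) = h) :
    n (n (sq (n g) h)) = sq (n g) h := by
  rw [n_mul hg, Dar, hh]

lemma pull (b c : A) (hc : n (n c) = c) : sq b c = ar (n c) (sq b one) := by
  conv_lhs => rw [← hc]
  rw [show n (n c) = ar (n c) one from rfl, ← EX]

lemma assoc_key {a b c : A} (ha : n (n a) = a) (hb : n (n b) = b) (hc : n (n c) = c) :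
    sq (n (sq (n a) b)) c = sq (n a) (sq (n b) c) := by
  have lhs : sq (n (sq (n a) b)) c = ar (n c) (sq (n a) b) := by
    rw [n_mul ha, pull (ar a (n b)) c hc, sq_one, Dar, hb]
  have rhs : sq (n b) c = ar (n c) b := by
    rw [pull (n b) c hc, sq_one, hb]
  rw [lhs, rhs, EX]

end PBCIAux

open PBCIAux

theorem stmt9 {A : Type*} [PseudoBCI A] :
    ∃ G : Group {x : A // ∃ a : A, ar a one = x},
      (∀ g h : {x : A // ∃ a : A, ar a one = x},
          ((g * h : {x : A // ∃ a : A, ar a one = x}) : A) = sq (ar g.1 one) h.1) ∧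
      ((1 : {x : A // ∃ a : A, ar a one = x}) : A) = one ∧
      (∀ g : {x : A // ∃ a : A, ar a one = x},
          ((g⁻¹ : {x : A // ∃ a : A, ar a one = x}) : A) = ar g.1 one) := by
  letI instMul : Mul {x : A // ∃ a : A, ar a one = x} :=
    ⟨fun g h => ⟨sq (n g.1) h.1, ⟨n (sq (n g.1) h.1),
      nn_mul (nn_of_mem g.2) (nn_of_mem h.2)⟩⟩⟩
  letI instOne : One {x : A // ∃ a : A, ar a one = x} :=
    ⟨⟨one, ⟨one, refl_ar one⟩⟩⟩
  letI instInv : Inv {x : A // ∃ a : A, ar a one = x} :=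
    ⟨fun g => ⟨n g.1, ⟨g.1, rfl⟩⟩⟩
  refine ⟨Group.ofLeftAxioms ?_ ?_ ?_, fun g h => rfl, rfl, fun g => rfl⟩
  · intro a b c
    exact Subtype.ext (assoc_key (nn_of_mem a.2) (nn_of_mem b.2) (nn_of_mem c.2))
  · intro a
    refine Subtype.ext ?_
    show sq (n (one : A)) a.1 = a.1
    rw [show n (one : A) = one from refl_ar one, ax4]
  · intro a
    refine Subtype.ext ?_
    show sq (n (n a.1)) a.1 = one
    rw [nn_of_mem a.2, refl_sq]
end

section
/- Let B be a pseudo-BCK-algebra and (H, ·, 1) a group with B ∩ H = {1}. On A = B ∪ H define x ◇ y (for ◇ ∈ {→, ⇝}) by: the original operation if x, y ∈ B; g → h = h·g⁻¹ and g ⇝ h = g⁻¹·h if x, y ∈ H; x ◇ y = y if x ∈ B, y ∈ H; and x ◇ y = x⁻¹ if x ∈ H∖{1}, y ∈ B. Then (A, →, ⇝, 1) is a pseudo-BCI-algebra whose integral part is B and whose group part is H. -/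
/-- gluing a pseudo-BCK-algebra `B` and a group `H` (with `B ∩ H = {e}`)
into a pseudo-BCI-algebra on `B ∪ H`, whose integral part is `B` and group part is `H`. -/
theorem stmt13 {X : Type*} (B H : Set X) (e : X)
    (arB sqB : X → X → X)        -- pseudo-BCK operations on B
    (m : X → X → X) (i : X → X)  -- group multiplication and inverse on H
    -- B ∩ H = {e}
    (hBH : B ∩ H = {e})
    -- (B, arB, sqB, e) is a pseudo-BCK-algebra:
    (heB : e ∈ B)
    (hBcl : ∀ x ∈ B, ∀ y ∈ B, arB x y ∈ B ∧ sqB x y ∈ B)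
    (hB1 : ∀ x ∈ B, ∀ y ∈ B, ∀ z ∈ B, sqB (arB x y) (sqB (arB y z) (arB x z)) = e)
    (hB2 : ∀ x ∈ B, ∀ y ∈ B, ∀ z ∈ B, arB (sqB x y) (arB (sqB y z) (sqB x z)) = e)
    (hB3 : ∀ x ∈ B, arB e x = x)
    (hB4 : ∀ x ∈ B, sqB e x = x)
    (hB5 : ∀ x ∈ B, ∀ y ∈ B, arB x y = e → arB y x = e → x = y)
    (hBint : ∀ x ∈ B, arB x e = e)
    -- (H, m, i, e) is a group:
    (heH : e ∈ H)
    (hHcl : ∀ g ∈ H, ∀ h ∈ H, m g h ∈ H)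
    (hHinv : ∀ g ∈ H, i g ∈ H)
    (hHassoc : ∀ g ∈ H, ∀ h ∈ H, ∀ k ∈ H, m (m g h) k = m g (m h k))
    (hHid : ∀ g ∈ H, m e g = g ∧ m g e = g)
    (hHinvmul : ∀ g ∈ H, m g (i g) = e ∧ m (i g) g = e)
    -- the operations on A = B ∪ H, defined by cases:
    (ar sq : X → X → X)
    (hcaseBB : ∀ x ∈ B, ∀ y ∈ B, ar x y = arB x y ∧ sq x y = sqB x y)
    (hcaseHH : ∀ x ∈ H, ∀ y ∈ H, ar x y = m y (i x) ∧ sq x y = m (i x) y)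
    (hcaseBH : ∀ x ∈ B, ∀ y ∈ H, ar x y = y ∧ sq x y = y)
    (hcaseHB : ∀ x ∈ H, x ≠ e → ∀ y ∈ B, ar x y = i x ∧ sq x y = i x) :
    -- conclusion: (B ∪ H, ar, sq, e) is a pseudo-BCI-algebra
    ((∀ x ∈ B ∪ H, ∀ y ∈ B ∪ H, ar x y ∈ B ∪ H ∧ sq x y ∈ B ∪ H) ∧
     (∀ x ∈ B ∪ H, ∀ y ∈ B ∪ H, ∀ z ∈ B ∪ H,
        sq (ar x y) (sq (ar y z) (ar x z)) = e) ∧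
     (∀ x ∈ B ∪ H, ∀ y ∈ B ∪ H, ∀ z ∈ B ∪ H,
        ar (sq x y) (ar (sq y z) (sq x z)) = e) ∧
     (∀ x ∈ B ∪ H, ar e x = x) ∧
     (∀ x ∈ B ∪ H, sq e x = x) ∧
     (∀ x ∈ B ∪ H, ∀ y ∈ B ∪ H, ar x y = e → ar y x = e → x = y)) ∧
    -- its integral part is B
    {x ∈ B ∪ H | ar x e = e} = B ∧
    -- and its group part is H
    {z : X | ∃ x ∈ B ∪ H, ar x e = z} = H := by
  -- basic helpers
  have part : ∀ x ∈ B ∪ H, x ∈ B ∨ (x ∈ H ∧ x ≠ e) := by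
    intro x hx
    by_cases hB : x ∈ B
    · exact Or.inl hB
    · rcases hx with h | h
      · exact absurd h hB
      · exact Or.inr ⟨h, fun he => hB (he ▸ heB)⟩
  -- group helpers
  have hie : i e = e :=
    ((hHid (i e) (hHinv e heH)).1).symm.trans (hHinvmul e heH).1
  have inv_uniq : ∀ g ∈ H, ∀ h ∈ H, m g h = e → h = i g := by
    intro g hg h hh hmul
    have h1 : m (i g) (m g h) = m (i g) e := by rw [hmul]
    rw [← hHassoc (i g) (hHinv g hg) g hg h hh, (hHinvmul g hg).2,
      (hHid h hh).1, (hHid (i g) (hHinv g hg)).2] at h1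
    exact h1
  have hii : ∀ g ∈ H, i (i g) = g := fun g hg =>
    (inv_uniq (i g) (hHinv g hg) g hg (hHinvmul g hg).2).symm
  have inv_ne : ∀ g ∈ H, g ≠ e → i g ≠ e := by
    intro g hg hge h
    apply hge
    have h2 := hii g hg
    rw [h, hie] at h2
    exact h2.symm
  have inv_mul : ∀ g ∈ H, ∀ h ∈ H, i (m g h) = m (i h) (i g) := by
    intro g hg h hh
    symm
    apply inv_uniq (m g h) (hHcl g hg h hh) (m (i h) (i g))
      (hHcl (i h) (hHinv h hh) (i g) (hHinv g hg))
    rw [hHassoc g hg h hh (m (i h) (i g)) (hHcl (i h) (hHinv h hh) (i g) (hHinv g hg)),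
      ← hHassoc h hh (i h) (hHinv h hh) (i g) (hHinv g hg),
      (hHinvmul h hh).1, (hHid (i g) (hHinv g hg)).1, (hHinvmul g hg).1]
  -- BCK helpers
  have sqB_e : ∀ b ∈ B, sqB b e = e := by
    intro b hb
    have h := hB1 e heB b hb e heB
    rw [hB3 b hb, hBint b hb, hB3 e heB, hB4 e heB] at h
    exact h
  -- case-lemmas for ar and sq
  have arBB : ∀ x ∈ B, ∀ y ∈ B, ar x y = arB x y := fun x hx y hy => (hcaseBB x hx y hy).1
  have sqBB : ∀ x ∈ B, ∀ y ∈ B, sq x y = sqB x y := fun x hx y hy => (hcaseBB x hx y hy).2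
  have arBH : ∀ x ∈ B, ∀ y ∈ H, ar x y = y := fun x hx y hy => (hcaseBH x hx y hy).1
  have sqBH : ∀ x ∈ B, ∀ y ∈ H, sq x y = y := fun x hx y hy => (hcaseBH x hx y hy).2
  have arHH : ∀ x ∈ H, ∀ y ∈ H, ar x y = m y (i x) := fun x hx y hy => (hcaseHH x hx y hy).1
  have sqHH : ∀ x ∈ H, ∀ y ∈ H, sq x y = m (i x) y := fun x hx y hy => (hcaseHH x hx y hy).2
  have arHB : ∀ x ∈ H, x ≠ e → ∀ y ∈ B, ar x y = i x := fun x hx hxe y hy => (hcaseHB x hx hxe y hy).1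
  have sqHB : ∀ x ∈ H, x ≠ e → ∀ y ∈ B, sq x y = i x := fun x hx hxe y hy => (hcaseHB x hx hxe y hy).2
  have sq_gg : ∀ g ∈ H, sq g g = e := by
    intro g hg; rw [sqHH g hg g hg, (hHinvmul g hg).2]
  have ar_gg : ∀ g ∈ H, ar g g = e := by
    intro g hg; rw [arHH g hg g hg, (hHinvmul g hg).1]
  refine ⟨⟨?_, ?_, ?_, ?_, ?_, ?_⟩, ?_, ?_⟩
  · -- closure
    intro x hx y hy
    rcases part x hx with hxB | ⟨hxH, hxe⟩ <;> rcases part y hy with hyB | ⟨hyH, hye⟩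
    · rw [arBB x hxB y hyB, sqBB x hxB y hyB]
      exact ⟨Or.inl (hBcl x hxB y hyB).1, Or.inl (hBcl x hxB y hyB).2⟩
    · rw [arBH x hxB y hyH, sqBH x hxB y hyH]
      exact ⟨Or.inr hyH, Or.inr hyH⟩
    · rw [arHB x hxH hxe y hyB, sqHB x hxH hxe y hyB]
      exact ⟨Or.inr (hHinv x hxH), Or.inr (hHinv x hxH)⟩
    · rw [arHH x hxH y hyH, sqHH x hxH y hyH]
      exact ⟨Or.inr (hHcl y hyH (i x) (hHinv x hxH)),
        Or.inr (hHcl (i x) (hHinv x hxH) y hyH)⟩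
  · -- axiom (i)
    intro x hx y hy z hz
    rcases part x hx with hxB | ⟨hxH, hxe⟩ <;> rcases part y hy with hyB | ⟨hyH, hye⟩ <;>
      rcases part z hz with hzB | ⟨hzH, hze⟩
    · -- B B B
      rw [arBB x hxB y hyB, arBB y hyB z hzB, arBB x hxB z hzB,
        sqBB (arB y z) (hBcl y hyB z hzB).1 (arB x z) (hBcl x hxB z hzB).1,
        sqBB (arB x y) (hBcl x hxB y hyB).1 _
          (hBcl (arB y z) (hBcl y hyB z hzB).1 (arB x z) (hBcl x hxB z hzB).1).2]
      exact hB1 x hxB y hyB z hzB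
    · -- B B H
      rw [arBB x hxB y hyB, arBH y hyB z hzH, arBH x hxB z hzH, sq_gg z hzH,
        sqBB (arB x y) (hBcl x hxB y hyB).1 e heB]
      exact sqB_e (arB x y) (hBcl x hxB y hyB).1
    · -- B H B
      rw [arBH x hxB y hyH, arHB y hyH hye z hzB, arBB x hxB z hzB,
        sqHB (i y) (hHinv y hyH) (inv_ne y hyH hye) (arB x z) (hBcl x hxB z hzB).1,
        hii y hyH, sq_gg y hyH]
    · -- B H H
      rw [arBH x hxB y hyH, arHH y hyH z hzH, arBH x hxB z hzH,
        sqHH (m z (i y)) (hHcl z hzH (i y) (hHinv y hyH)) z hzH,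
        inv_mul z hzH (i y) (hHinv y hyH), hii y hyH,
        hHassoc y hyH (i z) (hHinv z hzH) z hzH, (hHinvmul z hzH).2, (hHid y hyH).2,
        sq_gg y hyH]
    · -- H B B
      rw [arHB x hxH hxe y hyB, arBB y hyB z hzB, arHB x hxH hxe z hzB,
        sqBH (arB y z) (hBcl y hyB z hzB).1 (i x) (hHinv x hxH),
        sq_gg (i x) (hHinv x hxH)]
    · -- H B H
      rw [arHB x hxH hxe y hyB, arBH y hyB z hzH, arHH x hxH z hzH,
        sqHH z hzH (m z (i x)) (hHcl z hzH (i x) (hHinv x hxH)),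
        ← hHassoc (i z) (hHinv z hzH) z hzH (i x) (hHinv x hxH),
        (hHinvmul z hzH).2, (hHid (i x) (hHinv x hxH)).1,
        sq_gg (i x) (hHinv x hxH)]
    · -- H H B
      rw [arHH x hxH y hyH, arHB y hyH hye z hzB, arHB x hxH hxe z hzB,
        sqHH (i y) (hHinv y hyH) (i x) (hHinv x hxH), hii y hyH,
        sq_gg (m y (i x)) (hHcl y hyH (i x) (hHinv x hxH))]
    · -- H H H
      rw [arHH x hxH y hyH, arHH y hyH z hzH, arHH x hxH z hzH,
        sqHH (m z (i y)) (hHcl z hzH (i y) (hHinv y hyH))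
          (m z (i x)) (hHcl z hzH (i x) (hHinv x hxH)),
        inv_mul z hzH (i y) (hHinv y hyH), hii y hyH,
        hHassoc y hyH (i z) (hHinv z hzH) (m z (i x)) (hHcl z hzH (i x) (hHinv x hxH)),
        ← hHassoc (i z) (hHinv z hzH) z hzH (i x) (hHinv x hxH),
        (hHinvmul z hzH).2, (hHid (i x) (hHinv x hxH)).1,
        sq_gg (m y (i x)) (hHcl y hyH (i x) (hHinv x hxH))]
  · -- axiom (ii)
    intro x hx y hy z hz
    rcases part x hx with hxB | ⟨hxH, hxe⟩ <;> rcases part y hy with hyB | ⟨hyH, hye⟩ <;>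
      rcases part z hz with hzB | ⟨hzH, hze⟩
    · -- B B B
      rw [sqBB x hxB y hyB, sqBB y hyB z hzB, sqBB x hxB z hzB,
        arBB (sqB y z) (hBcl y hyB z hzB).2 (sqB x z) (hBcl x hxB z hzB).2,
        arBB (sqB x y) (hBcl x hxB y hyB).2 _
          (hBcl (sqB y z) (hBcl y hyB z hzB).2 (sqB x z) (hBcl x hxB z hzB).2).1]
      exact hB2 x hxB y hyB z hzB
    · -- B B H
      rw [sqBB x hxB y hyB, sqBH y hyB z hzH, sqBH x hxB z hzH, ar_gg z hzH,
        arBB (sqB x y) (hBcl x hxB y hyB).2 e heB]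
      exact hBint (sqB x y) (hBcl x hxB y hyB).2
    · -- B H B
      rw [sqBH x hxB y hyH, sqHB y hyH hye z hzB, sqBB x hxB z hzB,
        arHB (i y) (hHinv y hyH) (inv_ne y hyH hye) (sqB x z) (hBcl x hxB z hzB).2,
        hii y hyH, ar_gg y hyH]
    · -- B H H
      rw [sqBH x hxB y hyH, sqHH y hyH z hzH, sqBH x hxB z hzH,
        arHH (m (i y) z) (hHcl (i y) (hHinv y hyH) z hzH) z hzH,
        inv_mul (i y) (hHinv y hyH) z hzH, hii y hyH,
        ← hHassoc z hzH (i z) (hHinv z hzH) y hyH, (hHinvmul z hzH).1, (hHid y hyH).1,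
        ar_gg y hyH]
    · -- H B B
      rw [sqHB x hxH hxe y hyB, sqBB y hyB z hzB, sqHB x hxH hxe z hzB,
        arBH (sqB y z) (hBcl y hyB z hzB).2 (i x) (hHinv x hxH),
        ar_gg (i x) (hHinv x hxH)]
    · -- H B H
      rw [sqHB x hxH hxe y hyB, sqBH y hyB z hzH, sqHH x hxH z hzH,
        arHH z hzH (m (i x) z) (hHcl (i x) (hHinv x hxH) z hzH),
        hHassoc (i x) (hHinv x hxH) z hzH (i z) (hHinv z hzH),
        (hHinvmul z hzH).1, (hHid (i x) (hHinv x hxH)).2,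
        ar_gg (i x) (hHinv x hxH)]
    · -- H H B
      rw [sqHH x hxH y hyH, sqHB y hyH hye z hzB, sqHB x hxH hxe z hzB,
        arHH (i y) (hHinv y hyH) (i x) (hHinv x hxH), hii y hyH,
        ar_gg (m (i x) y) (hHcl (i x) (hHinv x hxH) y hyH)]
    · -- H H H
      rw [sqHH x hxH y hyH, sqHH y hyH z hzH, sqHH x hxH z hzH,
        arHH (m (i y) z) (hHcl (i y) (hHinv y hyH) z hzH)
          (m (i x) z) (hHcl (i x) (hHinv x hxH) z hzH),
        inv_mul (i y) (hHinv y hyH) z hzH, hii y hyH,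
        hHassoc (i x) (hHinv x hxH) z hzH (m (i z) y) (hHcl (i z) (hHinv z hzH) y hyH),
        ← hHassoc z hzH (i z) (hHinv z hzH) y hyH,
        (hHinvmul z hzH).1, (hHid y hyH).1,
        ar_gg (m (i x) y) (hHcl (i x) (hHinv x hxH) y hyH)]
  · -- left unit for ar
    intro x hx
    rcases part x hx with hxB | ⟨hxH, hxe⟩
    · rw [arBB e heB x hxB]; exact hB3 x hxB
    · rw [arBH e heB x hxH]
  · -- left unit for sq
    intro x hx
    rcases part x hx with hxB | ⟨hxH, hxe⟩
    · rw [sqBB e heB x hxB]; exact hB4 x hxB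
    · rw [sqBH e heB x hxH]
  · -- antisymmetry
    intro x hx y hy hxy hyx
    rcases part x hx with hxB | ⟨hxH, hxe⟩ <;> rcases part y hy with hyB | ⟨hyH, hye⟩
    · rw [arBB x hxB y hyB] at hxy
      rw [arBB y hyB x hxB] at hyx
      exact hB5 x hxB y hyB hxy hyx
    · rw [arBH x hxB y hyH] at hxy
      exact absurd hxy hye
    · rw [arBH y hyB x hxH] at hyx
      exact absurd hyx hxe
    · rw [arHH x hxH y hyH] at hxy
      have h1 : m (m y (i x)) x = m e x := by rw [hxy]
      rw [hHassoc y hyH (i x) (hHinv x hxH) x hxH, (hHinvmul x hxH).2,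
        (hHid y hyH).2, (hHid x hxH).1] at h1
      exact h1.symm
  · -- integral part is B
    ext x
    simp only [Set.mem_sep_iff, Set.mem_union]
    constructor
    · rintro ⟨hx, hxe⟩
      rcases part x (hx.elim Or.inl Or.inr) with hxB | ⟨hxH, hxne⟩
      · exact hxB
      · rw [arHB x hxH hxne e heB] at hxe
        exact absurd hxe (inv_ne x hxH hxne)
    · intro hxB
      refine ⟨Or.inl hxB, ?_⟩
      rw [arBB x hxB e heB]
      exact hBint x hxB
  · -- group part is H
    ext z
    simp only [Set.mem_setOf_eq]
    constructor
    · rintro ⟨x, hx, rfl⟩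
      rcases part x hx with hxB | ⟨hxH, hxe⟩
      · rw [arBB x hxB e heB, hBint x hxB]; exact heH
      · rw [arHB x hxH hxe e heB]; exact hHinv x hxH
    · intro hz
      by_cases hze : z = e
      · refine ⟨e, Or.inl heB, ?_⟩
        rw [arBB e heB e heB, hB3 e heB, hze]
      · refine ⟨i z, Or.inr (hHinv z hz), ?_⟩
        rw [arHB (i z) (hHinv z hz) (inv_ne z hz hze) e heB, hii z hz]
end

section
/- Let A be a pseudo-BCI-algebra with x · y = (x → 1) ⇝ y, group part G_A = {x→1 : x ∈ A}, and g⁻¹ = g → 1 for g ∈ G_A. Then the following are equivalent: (1) the operation · is associative on A; (2) (g · h) · x = g · (h · x) for all g, h ∈ G_A and x ∈ A; (3) g⁻¹ ⇝ (g ⇝ x) = x for all g ∈ G_A and x ∈ A. -/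
open PseudoBCI

namespace PseudoBCIProof

variable {A : Type*} [PseudoBCI A]

lemma ar_self (x : A) : ar x x = one := by
  have h := ax2 (one : A) one x
  rwa [ax4, ax4, ax3] at h

lemma sq_self (x : A) : sq x x = one := by
  have h := ax1 (one : A) one x
  rwa [ax3, ax3, ax4] at h

lemma P1 (x y : A) : sq x (sq (ar x y) y) = one := by
  have h := ax1 (one : A) x y
  rwa [ax3, ax3] at h

lemma P2 (x y : A) : ar x (ar (sq x y) y) = one := by
  have h := ax2 (one : A) x y
  rwa [ax4, ax4] at h

lemma sle_of_le {x y : A} (h : ar x y = one) : sq x y = one := by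
  have h1 := P1 x y
  rwa [h, ax4] at h1

lemma le_of_sle {x y : A} (h : sq x y = one) : ar x y = one := by
  have h1 := P2 x y
  rwa [h, ax3] at h1

lemma le_trans {x y z : A} (h1 : ar x y = one) (h2 : ar y z = one) :
    ar x z = one := by
  have h := ax1 x y z
  rwa [h1, h2, ax4, ax4] at h

lemma mono_ar2 {y z : A} (x : A) (h : ar y z = one) :
    sq (ar x y) (ar x z) = one := by
  have h1 := ax1 x y z
  rwa [h, ax4] at h1

lemma anti_ar1 {x y : A} (z : A) (h : ar x y = one) :
    sq (ar y z) (ar x z) = one := by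
  have h1 := ax1 x y z
  rwa [h, ax4] at h1

lemma mono_sq2 {y z : A} (x : A) (h : sq y z = one) :
    ar (sq x y) (sq x z) = one := by
  have h1 := ax2 x y z
  rwa [h, ax3] at h1

lemma anti_sq1 {x y : A} (z : A) (h : sq x y = one) :
    ar (sq y z) (sq x z) = one := by
  have h1 := ax2 x y z
  rwa [h, ax3] at h1

lemma neg_eq (x : A) : ar x one = sq x one := by
  have n1 := ax1 x one x
  rw [ax3, ar_self] at n1
  have n2 := ax2 x one x
  rw [ax4, sq_self] at n2
  exact ax5 _ _ (le_of_sle n1) n2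

/-- x→(y⇝z) ≤ y⇝(x→z) -/
lemma E1 (x y z : A) : ar (ar x (sq y z)) (sq y (ar x z)) = one := by
  have s1 : ar (ar x (sq y z)) (sq (ar (sq y z) z) (ar x z)) = one :=
    le_of_sle (ax1 x (sq y z) z)
  have s2 : ar (sq (ar (sq y z) z) (ar x z)) (sq y (ar x z)) = one :=
    anti_sq1 (ar x z) (sle_of_le (P2 y z))
  exact le_trans s1 s2

/-- x⇝(y→z) ≤ y→(x⇝z) -/
lemma E2 (x y z : A) : ar (sq x (ar y z)) (ar y (sq x z)) = one := by
  have s1 : ar (sq x (ar y z)) (ar (sq (ar y z) z) (sq x z)) = one :=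
    ax2 x (ar y z) z
  have s2 : ar (ar (sq (ar y z) z) (sq x z)) (ar y (sq x z)) = one := by
    have := anti_ar1 (sq x z) (le_of_sle (P1 y z))
    exact le_of_sle this
  exact le_trans s1 s2

/-- exchange: x→(y⇝z) = y⇝(x→z) -/
lemma exch (x y z : A) : ar x (sq y z) = sq y (ar x z) := by
  exact ax5 _ _ (E1 x y z) (E2 y x z)

lemma C8 (x y : A) : ar x (ar y one) = sq y (ar x one) := by
  rw [neg_eq y, exch]

/-- x' ≤ z→(x⇝z) -/
lemma P8' (x z : A) : ar (ar x one) (ar z (sq x z)) = one := by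
  have h := ax2 x one z
  rw [ax4] at h
  rwa [neg_eq]

/-- x ≤ x'' -/
lemma P11 (x : A) : ar x (ar (ar x one) one) = one := by
  have h := P1 x one
  rw [← neg_eq] at h
  exact le_of_sle h

lemma P10 {x y : A} (h : ar x y = one) : ar (ar y one) (ar x one) = one :=
  le_of_sle (anti_ar1 one h)

/-- x''' = x' -/
lemma P12 (x : A) : ar (ar (ar x one) one) one = ar x one :=
  ax5 _ _ (P10 (P11 x)) (P11 (ar x one))

/-- (x⇝y)' ≤ x'→y' -/
lemma dir1 (x y : A) :
    sq (ar (sq x y) one) (ar (ar x one) (ar y one)) = one := by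
  set t := ar (sq x y) one with ht
  have si : ar (ar x one) (ar y (sq x y)) = one := P8' x y
  have sii : ar (ar y (sq x y)) (ar y (ar t one)) = one :=
    le_of_sle (mono_ar2 y (P11 (sq x y)))
  have h : ar (ar x one) (ar y (ar t one)) = one := le_trans si sii
  rw [C8 y t] at h
  rwa [exch] at h

/-- x⇝y ≤ (y⇝x)' -/
lemma lemE (x y : A) : ar (sq x y) (ar (sq y x) one) = one := by
  have h := ax2 x y x
  rwa [sq_self] at h

/-- for g with g''=g : (g⇝y)' = y⇝g -/
lemma C3 (g y : A) (hg : ar (ar g one) one = g) :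
    ar (sq g y) one = sq y g := by
  have h1 : sq (ar (sq g y) one) (sq y g) = one := by
    have := dir1 g y
    rwa [C8 (ar g one) y, hg] at this
  have h2 : ar (sq y g) (ar (sq g y) one) = one := lemE y g
  exact ax5 _ _ (le_of_sle h1) h2

/-- (y⇝g)⇝z ≤ g⇝(y'⇝z)  (unconditional) -/
lemma Hdir1 (g y z : A) :
    ar (sq (sq y g) z) (sq g (sq (ar y one) z)) = one := by
  have step1 : ar g (sq (ar y one) (sq y g)) = one := by
    rw [exch]
    exact sle_of_le (P8' y g)
  have step2 : ar (sq (ar y one) (sq y g))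
      (ar (sq (sq y g) z) (sq (ar y one) z)) = one := ax2 (ar y one) (sq y g) z
  have h : ar g (ar (sq (sq y g) z) (sq (ar y one) z)) = one := le_trans step1 step2
  have h2 := sle_of_le h
  rw [exch]
  exact h2

lemma Hdir2 (g y z : A) (hg : ar (ar g one) one = g)
    (hinv : ∀ u : A, sq g (sq (ar g one) u) = u) :
    ar (sq g (sq (ar y one) z)) (sq (sq y g) z) = one := by
  have stepa : ar (ar g one) (sq (sq y g) (ar y one)) = one := by
    rw [exch, C8 (ar g one) y, hg, sq_self (sq y g)]
  have stepb : ar (sq (sq y g) (ar y one))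
      (ar (sq (ar y one) z) (sq (sq y g) z)) = one := ax2 (sq y g) (ar y one) z
  have h : ar (ar g one) (ar (sq (ar y one) z) (sq (sq y g) z)) = one :=
    le_trans stepa stepb
  have hBA : ar (sq (ar y one) z) (sq (ar g one) (sq (sq y g) z)) = one := by
    rw [exch]
    exact sle_of_le h
  have h2 := mono_sq2 g (sle_of_le hBA)
  rwa [hinv] at h2

lemma three_to_one
    (H3 : ∀ g x : A, (∃ a : A, ar a one = g) → sq (ar g one) (sq g x) = x) :
    ∀ x y z : A, sq (ar (sq (ar x one) y) one) z
      = sq (ar x one) (sq (ar y one) z) := by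
  intro x y z
  set g := ar x one with hgdef
  have hg : ar (ar g one) one = g := P12 x
  have hinv : ∀ u : A, sq g (sq (ar g one) u) = u := by
    intro u
    have := H3 (ar g one) u ⟨g, rfl⟩
    rwa [hg] at this
  rw [C3 g y hg]
  exact ax5 _ _ (Hdir1 g y z) (Hdir2 g y z hg hinv)

lemma two_to_three
    (H2 : ∀ g h x : A, (∃ a : A, ar a one = g) → (∃ a : A, ar a one = h) →
      sq (ar (sq (ar g one) h) one) x = sq (ar g one) (sq (ar h one) x)) :
    ∀ g x : A, (∃ a : A, ar a one = g) → sq (ar g one) (sq g x) = x := by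
  rintro g x ⟨a, ha⟩
  have hg : ar (ar g one) one = g := by rw [← ha]; exact P12 a
  have h := H2 g (ar g one) x ⟨a, ha⟩ ⟨g, rfl⟩
  rw [sq_self, ax3, ax4, hg] at h
  exact h.symm

end PseudoBCIProof

open PseudoBCIProof in
theorem stmt16 {A : Type*} [PseudoBCI A] :
    ((∀ x y z : A, sq (ar (sq (ar x one) y) one) z = sq (ar x one) (sq (ar y one) z)) ↔
      (∀ g h x : A, (∃ a : A, ar a one = g) → (∃ a : A, ar a one = h) →
        sq (ar (sq (ar g one) h) one) x = sq (ar g one) (sq (ar h one) x))) ∧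
    ((∀ g h x : A, (∃ a : A, ar a one = g) → (∃ a : A, ar a one = h) →
        sq (ar (sq (ar g one) h) one) x = sq (ar g one) (sq (ar h one) x)) ↔
      (∀ g x : A, (∃ a : A, ar a one = g) → sq (ar g one) (sq g x) = x)) := by
  constructor
  · constructor
    · exact fun H g h x _ _ => H g h x
    · exact fun H2 => three_to_one (two_to_three H2)
  · constructor
    · exact two_to_three
    · exact fun H3 g h x _ _ => three_to_one H3 g h x
end

section
/- Let A be a pseudo-BCI-algebra. A nonempty subset F ⊆ A is a filter (i.e., 1 ∈ F; a, a→b ∈ F imply b ∈ F; a ∈ F implies a→1 ∈ F; and a→b ∈ F iff a⇝b ∈ F) if and only if 1 ∈ F and F is closed under the ideal terms t₁(x,y₁,y₂) = (y₁ → (y₂ → x)) → x, t₂(x,y) = (y ⇝ x) ⇝ x, and t₃(y) = y → 1, i.e., t₁(a,b₁,b₂), t₂(a,b), t₃(b) ∈ F for all a, a's ∈ A and b, b₁, b₂ ∈ F. -/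
open PseudoBCI

section Lemmas

variable {A : Type*} [PseudoBCI A]

lemma pb_L1 (y z : A) : sq y (sq (ar y z) z) = one := by
  have h := ax1 (one : A) y z
  simpa [ax3] using h

lemma pb_L2 (y z : A) : ar y (ar (sq y z) z) = one := by
  have h := ax2 (one : A) y z
  simpa [ax4] using h

lemma pb_M1 {p q : A} (r : A) (h : ar p q = one) :
    sq (ar q r) (ar p r) = one := by
  have h2 := ax1 p q r
  rw [h, ax4] at h2
  exact h2

lemma pb_M2 {p q : A} (r : A) (h : sq p q = one) :
    ar (sq q r) (sq p r) = one := by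
  have h2 := ax2 p q r
  rw [h, ax3] at h2
  exact h2

end Lemmas

theorem stmt19 {A : Type*} [PseudoBCI A] (F : Set A) (hF : F.Nonempty) :
    ((one : A) ∈ F ∧
     (∀ a b : A, a ∈ F → ar a b ∈ F → b ∈ F) ∧
     (∀ a : A, a ∈ F → ar a one ∈ F) ∧
     (∀ a b : A, ar a b ∈ F ↔ sq a b ∈ F)) ↔
    ((one : A) ∈ F ∧
     (∀ a : A, ∀ b₁ ∈ F, ∀ b₂ ∈ F, ar (ar b₁ (ar b₂ a)) a ∈ F) ∧
     (∀ a : A, ∀ b ∈ F, sq (sq b a) a ∈ F) ∧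
     (∀ b ∈ F, ar b one ∈ F)) := by
  have ar_self : ∀ x : A, ar x x = one := by
    intro x
    have h := ax2 (one : A) one x
    simpa [ax3, ax4] using h
  constructor
  · rintro ⟨h1, hmp, h3, hiff⟩
    -- membership helpers
    have memb : ∀ b w : A, b ∈ F → ar b w = one → w ∈ F := by
      intro b w hb h
      exact hmp b w hb (h ▸ h1)
    have memb' : ∀ b w : A, b ∈ F → sq b w = one → w ∈ F := by
      intro b w hb h
      exact hmp b w hb ((hiff b w).mpr (h ▸ h1))
    refine ⟨h1, ?_, ?_, fun b hb => h3 b hb⟩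
    · intro a b₁ hb₁ b₂ hb₂
      -- s : sq (ar b₁ (ar b₂ a)) (ar b₂ a) ∈ F
      have hs : sq (ar b₁ (ar b₂ a)) (ar b₂ a) ∈ F :=
        memb' b₁ _ hb₁ (pb_L1 b₁ (ar b₂ a))
      -- v : sq (ar b₂ a) a ∈ F
      have hv : sq (ar b₂ a) a ∈ F :=
        memb' b₂ _ hb₂ (pb_L1 b₂ a)
      have key := ax2 (ar b₁ (ar b₂ a)) (ar b₂ a) a
      have h4 : ar (sq (ar b₂ a) a) (sq (ar b₁ (ar b₂ a)) a) ∈ F :=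
        memb _ _ hs key
      have h5 : sq (ar b₁ (ar b₂ a)) a ∈ F := hmp _ _ hv h4
      exact (hiff _ _).mpr h5
    · intro a b hb
      have h4 : ar (sq b a) a ∈ F := memb b _ hb (pb_L2 b a)
      exact (hiff _ _).mp h4
  · rintro ⟨h1, ht1, ht2, ht3⟩
    -- modus ponens for ar
    have hmp : ∀ a b : A, a ∈ F → ar a b ∈ F → b ∈ F := by
      intro a b ha hab
      have h := ht1 b (ar a b) hab a ha
      rwa [ar_self, ax3] at h
    -- membership from an element below in the sq sense
    have memb2 : ∀ w t : A, w ∈ F → sq w t = one → t ∈ F := by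
      intro w t hw h
      have h2 := ht2 t w hw
      rwa [h, ax4] at h2
    have memb1 : ∀ w t : A, w ∈ F → ar w t = one → t ∈ F := by
      intro w t hw h
      have h2 := ht1 t w hw one h1
      rwa [ax3, h, ax3] at h2
    refine ⟨h1, hmp, fun a ha => ht3 a ha, ?_⟩
    intro a b
    constructor
    · intro hp
      have hw : sq (sq (ar a b) b) b ∈ F := ht2 b (ar a b) hp
      have key : ar (sq (sq (ar a b) b) b) (sq a b) = one :=
        pb_M2 b (pb_L1 a b)
      exact memb1 _ _ hw key
    · intro hq
      have hw : ar (ar (sq a b) (ar one b)) b ∈ F := ht1 b (sq a b) hq one h1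
      rw [ax3] at hw
      have key : sq (ar (ar (sq a b) b) b) (ar a b) = one :=
        pb_M1 b (pb_L2 a b)
      exact memb2 _ _ hw key
end
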